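/- Corollary (non-uniqueness of generating stencils): two valid stencils M1, M2 : (ZMod 2d)² → ℂ generate the same M-PPO frame, A^{M1}(α) = A^{M2}(α) for all α ∈ (ZMod d)² (equivalently, the same M-DWF for every operator), if and only if their projections agree: P M1 = P M2. -/

import Mathlib

open scoped BigOperators
open Matrix

noncomputable section

/-- `omega n a = exp(2πi a / n)`, the `n`-th roots of unity raised to integer power `a`. -/
def omega (n : ℕ) (a : ℤ) : ℂ := Complex.exp (2 * Real.pi * Complex.I * a / n)

/-- `Zpow d k = Σ_j ω_d^(k·j) |j⟩⟨j|`, the `k`-th power of the clock operator. -/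
def Zpow (d : ℕ) (k : ℤ) : Matrix (ZMod d) (ZMod d) ℂ :=
  Matrix.of fun i j => if i = j then omega d (k * (j.val : ℤ)) else 0

/-- `Xpow d k = Σ_j |j+k⟩⟨j|`, the `k`-th power of the shift operator. -/
def Xpow (d : ℕ) (k : ℤ) : Matrix (ZMod d) (ZMod d) ℂ :=
  Matrix.of fun i j => if i = j + (k : ZMod d) then 1 else 0

/-- The Weyl–Heisenberg displacement operator `V(k) = ω_{2d}^{-k₁k₂} Z^{k₂} X^{k₁}` for `k ∈ ℤ²`. -/
def Vint (d : ℕ) [NeZero d] (k : ℤ × ℤ) : Matrix (ZMod d) (ZMod d) ℂ :=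
  omega (2 * d) (-(k.1 * k.2)) • (Zpow d k.2 * Xpow d k.1)

/-- The WHDO on the doubled phase space `(ZMod (2d))²`. -/
def V (d : ℕ) [NeZero d] (m : ZMod (2 * d) × ZMod (2 * d)) : Matrix (ZMod d) (ZMod d) ℂ :=
  Vint d ((m.1.val : ℤ), (m.2.val : ℤ))

/-- Discrete parity operator `R = Σ_j |-j⟩⟨j|`. -/
def R (d : ℕ) : Matrix (ZMod d) (ZMod d) ℂ :=
  Matrix.of fun i j => if i = -j then 1 else 0

/-- Doubled phase-point operator `A(m) = V(m)·R`. -/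
def A (d : ℕ) [NeZero d] (m : ZMod (2 * d) × ZMod (2 * d)) : Matrix (ZMod d) (ZMod d) ℂ :=
  V d m * R d

variable (d : ℕ) [NeZero d]

/-- Doubled Wigner transform: `Wig[O](m) = (1/(2d)) Tr(A(m)† O)`. -/
def Wig (O : Matrix (ZMod d) (ZMod d) ℂ) (m : ZMod (2 * d) × ZMod (2 * d)) : ℂ :=
  (1 / (2 * (d : ℂ))) * ((A d m)ᴴ * O).trace

/-- Doubled Weyl transform: `Op[f] = (1/2) Σ_m f(m) A(m)`. -/
def OpW (f : ZMod (2 * d) × ZMod (2 * d) → ℂ) : Matrix (ZMod d) (ZMod d) ℂ :=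
  (1 / 2 : ℂ) • ∑ m : ZMod (2 * d) × ZMod (2 * d), f m • A d m

/-- The projector `P = Wig ∘ Op` on functions on the doubled phase space. -/
def P (f : ZMod (2 * d) × ZMod (2 * d) → ℂ) : ZMod (2 * d) × ZMod (2 * d) → ℂ :=
  Wig d (OpW d f)

/-- Inner product on functions on the doubled phase space. -/
def ip (f g : ZMod (2 * d) × ZMod (2 * d) → ℂ) : ℂ :=
  ∑ m : ZMod (2 * d) × ZMod (2 * d), (starRingEnd ℂ) (f m) * g m

/-- Cross-correlation `(f ⋆ g)(m) = Σ_{m'} conj(f m') g(m'+m)`. -/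
def crossCor (f g : ZMod (2 * d) × ZMod (2 * d) → ℂ) (m : ZMod (2 * d) × ZMod (2 * d)) : ℂ :=
  ∑ m' : ZMod (2 * d) × ZMod (2 * d), (starRingEnd ℂ) (f m') * g (m' + m)

/-- The doubling map `ZMod d → ZMod (2d)`, `a ↦ 2a`. -/
def dbl (a : ZMod d) : ZMod (2 * d) := ((2 * a.val : ℕ) : ZMod (2 * d))

/-- The doubling map on the phase space. -/
def dbl2 (α : ZMod d × ZMod d) : ZMod (2 * d) × ZMod (2 * d) := (dbl d α.1, dbl d α.2)

/-- A stencil `M` is valid if its projection `M̄ = P M` is real-valued (M1),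
sums to 1 (M2), and satisfies the autocorrelation condition (M3). -/
def IsValidStencil (M : ZMod (2 * d) × ZMod (2 * d) → ℂ) : Prop :=
  (∀ m, (starRingEnd ℂ) (P d M m) = P d M m) ∧
  (∑ m : ZMod (2 * d) × ZMod (2 * d), P d M m) = 1 ∧
  (∀ α : ZMod d × ZMod d,
    crossCor d (P d M) (P d M) (dbl2 d α) = if α = 0 then 1 else 0)

/-- The `M`-PPO frame generated by a stencil `M`:
`A^M(α) = (1/2) Σ_{m'} M(m') A(m' + 2α)`. -/
def AM (M : ZMod (2 * d) × ZMod (2 * d) → ℂ) (α : ZMod d × ZMod d) :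
    Matrix (ZMod d) (ZMod d) ℂ :=
  (1 / 2 : ℂ) • ∑ m' : ZMod (2 * d) × ZMod (2 * d), M m' • A d (m' + dbl2 d α)

/-- A family of phase-point operators on `(ZMod d)²` is a valid PPO frame if it is
Hermitian (A1), trace-1 (A2), orthogonal (A3), and WHDO-covariant (A4). -/
def IsValidPPOFrame (B : ZMod d × ZMod d → Matrix (ZMod d) (ZMod d) ℂ) : Prop :=
  (∀ α, (B α)ᴴ = B α) ∧
  (∀ α, (B α).trace = 1) ∧
  (∀ α β, ((B α)ᴴ * B β).trace = if α = β then (d : ℂ) else 0) ∧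
  (∀ (k : ℤ × ℤ) (α : ZMod d × ZMod d),
    Vint d k * B α * (Vint d k)ᴴ = B (α + ((k.1 : ZMod d), (k.2 : ZMod d))))

/-- The `M`-Wigner transform: `Wig^M[O](α) = (1/d) Tr(A^M(α)† O)`. -/
def WigM (M : ZMod (2 * d) × ZMod (2 * d) → ℂ) (O : Matrix (ZMod d) (ZMod d) ℂ)
    (α : ZMod d × ZMod d) : ℂ :=
  (1 / (d : ℂ)) * ((AM d M α)ᴴ * O).trace

/-- The `M`-Weyl transform: `Op^M[f] = Σ_α f(α) A^M(α)`. -/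
def OpM (M : ZMod (2 * d) × ZMod (2 * d) → ℂ) (f : ZMod d × ZMod d → ℂ) :
    Matrix (ZMod d) (ZMod d) ℂ :=
  ∑ α : ZMod d × ZMod d, f α • AM d M α

/-- The symplectic discrete Fourier transform. -/
def SDFT (f : ZMod (2 * d) × ZMod (2 * d) → ℂ) (m : ZMod (2 * d) × ZMod (2 * d)) : ℂ :=
  (1 / (2 * (d : ℂ))) * ∑ m' : ZMod (2 * d) × ZMod (2 * d),
    omega (2 * d) (-((m.1.val : ℤ) * (m'.2.val : ℤ) - (m.2.val : ℤ) * (m'.1.val : ℤ))) * f m'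


/-- Coarse-grain-stencil PPO frame: `B(α) = (1/2) Σ_{b∈{0,1}²} A(2α + b)`. -/
def Bcgs (α : ZMod d × ZMod d) : Matrix (ZMod d) (ZMod d) ℂ :=
  (1 / 2 : ℂ) • ∑ b : ZMod 2 × ZMod 2,
    A d (dbl d α.1 + (b.1.val : ZMod (2 * d)), dbl d α.2 + (b.2.val : ZMod (2 * d)))

/-- Momentum basis state `|p⟩ = (1/√d) Σ_j ω_d^{p j} |j⟩`. -/
def pvec (p : ZMod d) : ZMod d → ℂ :=
  fun j => (1 / ((Real.sqrt d : ℝ) : ℂ)) * omega d ((p.val : ℤ) * (j.val : ℤ))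

/-- One-dimensional Dirichlet kernel `K(m) = (1/d) Σ_{t=-(d-1)/2}^{(d-1)/2} ω_{2d}^{t m}`. -/
def Kdir (m : ZMod (2 * d)) : ℂ :=
  (1 / (d : ℂ)) * ∑ t ∈ Finset.Icc (-(((d : ℤ) - 1) / 2)) (((d : ℤ) - 1) / 2),
    omega (2 * d) (t * (m.val : ℤ))

end

section Aux
variable (d : ℕ) [NeZero d]

lemma omega_add' (n : ℕ) (a b : ℤ) : omega n (a + b) = omega n a * omega n b := by
  unfold omega; rw [← Complex.exp_add]; congr 1; push_cast; ring

lemma omega_dvd (n : ℕ) (a : ℤ) (h : (n : ℤ) ∣ a) : omega n a = 1 := by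
  obtain ⟨k, rfl⟩ := h
  unfold omega
  rcases eq_or_ne (n : ℂ) 0 with h0 | h0
  · have : (n : ℕ) = 0 := by exact_mod_cast h0
    simp [this, Complex.exp_zero]
  · rw [show 2 * ↑Real.pi * Complex.I * ↑((n:ℤ) * k) / ↑n = ↑k * (2 * ↑Real.pi * Complex.I) by
      push_cast; field_simp]
    exact Complex.exp_int_mul_two_pi_mul_I k

lemma omega_congr (n : ℕ) (a b : ℤ) (h : (n : ℤ) ∣ (a - b)) : omega n a = omega n b := by
  have h2 : omega n a = omega n (b + (a - b)) := by norm_num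
  rw [h2, omega_add', omega_dvd n _ h, mul_one]

lemma omega_eq_one_iff (n : ℕ) [NeZero n] (a : ℤ) : omega n a = 1 ↔ (n : ℤ) ∣ a := by
  constructor
  · intro h
    unfold omega at h
    rw [Complex.exp_eq_one_iff] at h
    obtain ⟨k, hk⟩ := h
    have hn : (n : ℂ) ≠ 0 := Nat.cast_ne_zero.mpr (NeZero.ne n)
    have hpi : (2 * (Real.pi:ℂ) * Complex.I) ≠ 0 := by
      simp [Real.pi_ne_zero, Complex.I_ne_zero, Complex.ofReal_ne_zero]
    field_simp at hk
    have h2 : (a : ℂ) * (2 * Real.pi * Complex.I) = (k * n : ℤ) * (2 * Real.pi * Complex.I) := by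
      push_cast; linear_combination (2 * (Real.pi:ℂ) * Complex.I) * hk
    have h3 : (a : ℂ) = ((k * n : ℤ) : ℂ) := mul_right_cancel₀ hpi h2
    have h4 : a = k * n := by exact_mod_cast h3
    exact ⟨k, by rw [h4]; ring⟩
  · exact omega_dvd n a

lemma omega_nsmul (n : ℕ) (a : ℤ) (t : ℕ) : omega n (t * a) = omega n a ^ t := by
  induction t with
  | zero => simpa using omega_dvd n 0 (by simp)
  | succ t ih =>
      rw [show ((t+1 : ℕ) : ℤ) * a = t * a + a by push_cast; ring, omega_add', ih, pow_succ]

lemma sum_omega (n : ℕ) [NeZero n] (c : ℤ) :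
    ∑ t : ZMod n, omega n ((t.val : ℤ) * c) = if (n : ℤ) ∣ c then (n : ℂ) else 0 := by
  have hrw : ∀ t : ZMod n, omega n ((t.val : ℤ) * c) = omega n c ^ t.val := fun t =>
    omega_nsmul n c t.val
  simp only [hrw]
  have hbij : ∑ t : ZMod n, omega n c ^ t.val = ∑ i ∈ Finset.range n, omega n c ^ i := by
    rw [← Fin.sum_univ_eq_sum_range]
    apply Fintype.sum_bijective (fun t : ZMod n => (⟨t.val, t.val_lt⟩ : Fin n))
    · constructor
      · intro a b hab
        have := congrArg Fin.val hab
        simp at this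
        exact ZMod.val_injective n this
      · intro i
        exact ⟨(i : ZMod n), by ext; simp [ZMod.val_cast_of_lt i.isLt]⟩
    · intro t; rfl
  rw [hbij]
  by_cases h : (n : ℤ) ∣ c
  · rw [omega_dvd n c h]; simp [h]
  · rw [if_neg h]
    have hne : omega n c ≠ 1 := fun hc => h ((omega_eq_one_iff n c).mp hc)
    rw [geom_sum_eq hne n]
    have hn : omega n c ^ n = 1 := by
      rw [← omega_nsmul]; exact omega_dvd n _ ⟨c, by ring⟩
    simp [hn]

lemma omega_two_mul (a : ℤ) : omega (2 * d) (2 * a) = omega d a := by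
  unfold omega
  congr 1
  have hd : (d : ℂ) ≠ 0 := Nat.cast_ne_zero.mpr (NeZero.ne d)
  push_cast
  field_simp

lemma zmod_dvd_of_cast_eq (n : ℕ) (a b : ℤ) (h : ((a : ZMod n) = (b : ZMod n))) :
    (n : ℤ) ∣ (a - b) := by
  rw [← ZMod.intCast_zmod_eq_zero_iff_dvd]
  push_cast
  rw [h]; ring

lemma A_apply (m : ZMod (2 * d) × ZMod (2 * d)) (i j : ZMod d) :
    A d m i j = if i + j = ((m.1.val : ℤ) : ZMod d)
      then omega (2 * d) (2 * (m.2.val : ℤ) * (i.val : ℤ) - (m.1.val : ℤ) * (m.2.val : ℤ))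
      else 0 := by
  unfold A V Vint R
  rw [Matrix.mul_apply]
  simp only [Matrix.smul_apply, Matrix.of_apply, smul_eq_mul]
  have step1 : ∀ k : ZMod d, (omega (2*d) (-((m.1.val:ℤ) * m.2.val)) *
      (Zpow d m.2.val * Xpow d m.1.val) i k) * (if k = -j then (1:ℂ) else 0)
      = if k = -j then omega (2*d) (-((m.1.val:ℤ) * m.2.val)) *
        (Zpow d m.2.val * Xpow d m.1.val) i (-j) else 0 := by
    intro k
    by_cases hk : k = -j <;> simp [hk]
  rw [Finset.sum_congr rfl (fun k _ => step1 k), Finset.sum_ite_eq' Finset.univ (-j)]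
  simp only [Finset.mem_univ, if_true]
  unfold Zpow Xpow
  rw [Matrix.mul_apply]
  simp only [Matrix.of_apply]
  have step2 : ∀ k : ZMod d, (if i = k then omega d ((m.2.val:ℤ) * (k.val:ℤ)) else 0) *
      (if k = -j + ((m.1.val:ℤ) : ZMod d) then (1:ℂ) else 0)
      = if k = i then (if i = -j + ((m.1.val:ℤ) : ZMod d)
          then omega d ((m.2.val:ℤ) * (i.val:ℤ)) else 0) else 0 := by
    intro k
    by_cases hk : k = i
    · subst hk; by_cases h2 : k = -j + ((m.1.val:ℤ) : ZMod d) <;> simp [h2]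
    · have : ¬ (i = k) := fun h => hk h.symm
      simp [this, hk]
  rw [Finset.sum_congr rfl (fun k _ => step2 k), Finset.sum_ite_eq' Finset.univ i]
  simp only [Finset.mem_univ, if_true]
  by_cases hc : i = -j + ((m.1.val:ℤ) : ZMod d)
  · have hc' : i + j = ((m.1.val:ℤ) : ZMod d) := by rw [hc]; ring
    rw [if_pos hc, if_pos hc']
    rw [← omega_two_mul d ((m.2.val:ℤ) * (i.val:ℤ)), ← omega_add']
    congr 1
    ring
  · have hc' : ¬ (i + j = ((m.1.val:ℤ) : ZMod d)) := by
      intro h; exact hc (by rw [← h]; ring)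
    rw [if_neg hc, if_neg hc', mul_zero]

end Aux
section Aux2
variable (d : ℕ) [NeZero d]

lemma natCast_val_int (n : ℕ) [NeZero n] (x : ZMod n) : (((x.val : ℤ)) : ZMod n) = x := by
  push_cast
  simp [ZMod.natCast_val, ZMod.cast_id]

lemma A_apply' (m : ZMod (2 * d) × ZMod (2 * d)) (n1 n2 : ℤ)
    (h1 : ((n1 : ZMod (2 * d))) = m.1) (h2 : ((n2 : ZMod (2 * d))) = m.2)
    (i j : ZMod d) (i' : ℤ) (hi : ((i' : ZMod d)) = i) :
    A d m i j = if i + j = ((n1 : ℤ) : ZMod d)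
      then omega (2 * d) (2 * n2 * i' - n1 * n2) else 0 := by
  rw [A_apply]
  have e1 : ((2 * d : ℕ) : ℤ) ∣ n1 - (m.1.val : ℤ) :=
    zmod_dvd_of_cast_eq _ _ _ (by rw [h1, natCast_val_int])
  have e2 : ((2 * d : ℕ) : ℤ) ∣ n2 - (m.2.val : ℤ) :=
    zmod_dvd_of_cast_eq _ _ _ (by rw [h2, natCast_val_int])
  have e3 : ((d : ℕ) : ℤ) ∣ i' - (i.val : ℤ) :=
    zmod_dvd_of_cast_eq _ _ _ (by rw [hi, natCast_val_int])
  have hcond : (((m.1.val : ℤ)) : ZMod d) = ((n1 : ℤ) : ZMod d) := by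
    have : ((d : ℕ) : ℤ) ∣ (m.1.val : ℤ) - n1 := by
      obtain ⟨s, hs⟩ := e1
      exact ⟨-(2*s), by push_cast at hs ⊢; linear_combination -hs⟩
    obtain ⟨s, hs⟩ := this
    have : (m.1.val : ℤ) = n1 + d * s := by linarith
    rw [this]
    push_cast
    simp
  rw [hcond]
  by_cases hc : i + j = ((n1 : ℤ) : ZMod d)
  · rw [if_pos hc, if_pos hc]
    apply omega_congr
    obtain ⟨s1, hs1⟩ := e1
    obtain ⟨s2, hs2⟩ := e2
    obtain ⟨s3, hs3⟩ := e3
    push_cast at hs1 hs2 hs3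
    have hn1 : n1 = (m.1.val : ℤ) + 2 * d * s1 := by linarith
    have hn2 : n2 = (m.2.val : ℤ) + 2 * d * s2 := by linarith
    have hi' : i' = (i.val : ℤ) + d * s3 := by linarith
    refine ⟨(m.1.val : ℤ) * s2 + s1 * (m.2.val : ℤ) + 2 * d * s1 * s2
        - (m.2.val : ℤ) * s3 - 2 * s2 * (i.val : ℤ) - 2 * d * s2 * s3, ?_⟩
    rw [hn1, hn2, hi']
    push_cast
    ring
  · rw [if_neg hc, if_neg hc]

lemma Vint_apply (k : ℤ × ℤ) (i j : ZMod d) :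
    Vint d k i j = if i = j + ((k.1 : ZMod d))
      then omega (2 * d) (2 * k.2 * (i.val : ℤ) - k.1 * k.2) else 0 := by
  unfold Vint Zpow Xpow
  simp only [Matrix.smul_apply, smul_eq_mul, Matrix.mul_apply, Matrix.of_apply]
  have step : ∀ l : ZMod d, (if i = l then omega d (k.2 * (l.val : ℤ)) else 0) *
      (if l = j + (k.1 : ZMod d) then (1:ℂ) else 0)
      = if l = i then (if i = j + (k.1 : ZMod d) then omega d (k.2 * (i.val : ℤ)) else 0)
        else 0 := by
    intro l
    by_cases hl : l = i
    · subst hl; by_cases h2 : l = j + (k.1 : ZMod d) <;> simp [h2]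
    · have : ¬ (i = l) := fun h => hl h.symm
      simp [this, hl]
  rw [Finset.sum_congr rfl (fun l _ => step l), Finset.sum_ite_eq' Finset.univ i]
  simp only [Finset.mem_univ, if_true]
  by_cases hc : i = j + ((k.1 : ZMod d))
  · rw [if_pos hc, if_pos hc, ← omega_two_mul d (k.2 * (i.val : ℤ)), ← omega_add']
    congr 1
    ring
  · rw [if_neg hc, if_neg hc, mul_zero]

end Aux2
section Aux3
variable (d : ℕ) [NeZero d]

lemma omega_conj (n : ℕ) (a : ℤ) : (starRingEnd ℂ) (omega n a) = omega n (-a) := by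
  unfold omega
  rw [← Complex.exp_conj]
  congr 1
  simp [map_div₀, Complex.conj_I, map_ofNat]

lemma dvd_sub_val_iff (a k : ZMod d) :
    ((d : ℕ) : ℤ) ∣ ((a.val : ℤ) - (k.val : ℤ)) ↔ k = a := by
  constructor
  · intro h
    have : (((a.val : ℤ)) : ZMod d) = (((k.val : ℤ)) : ZMod d) := by
      obtain ⟨s, hs⟩ := h
      have : (a.val : ℤ) = (k.val : ℤ) + d * s := by linarith
      rw [this]; push_cast; simp
    rw [natCast_val_int, natCast_val_int] at this
    exact this.symm
  · rintro rfl; simp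

lemma card_fiber (c : ZMod d) :
    (Finset.univ.filter fun m1 : ZMod (2 * d) => (((m1.val : ℤ)) : ZMod d) = c).card = 2 := by
  have hd : 0 < d := Nat.pos_of_ne_zero (NeZero.ne d)
  have hset : (Finset.univ.filter fun m1 : ZMod (2 * d) => (((m1.val : ℤ)) : ZMod d) = c)
      = {((c.val : ℕ) : ZMod (2 * d)), ((c.val + d : ℕ) : ZMod (2 * d))} := by
    ext m1
    simp only [Finset.mem_filter, Finset.mem_univ, true_and, Finset.mem_insert,
      Finset.mem_singleton]
    constructor
    · intro h
      have hmod : m1.val % d = c.val := by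
        have h1 : ((m1.val : ℕ) : ZMod d).val = m1.val % d := ZMod.val_natCast d m1.val
        have h2 : (((m1.val : ℤ)) : ZMod d) = ((m1.val : ℕ) : ZMod d) := by push_cast; rfl
        rw [h2] at h
        rw [← h1, h]
      have hlt : m1.val < 2 * d := m1.val_lt
      have hdm := Nat.div_add_mod m1.val d
      have hq : m1.val / d < 2 := Nat.div_lt_of_lt_mul (by omega)
      have hval : m1.val = c.val ∨ m1.val = c.val + d := by
        interval_cases h : m1.val / d <;> omega
      have hm1 : m1 = ((m1.val : ℕ) : ZMod (2 * d)) := by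
        simp [ZMod.natCast_val, ZMod.cast_id]
      rcases hval with hv | hv
      · left; rw [hm1, hv]
      · right; rw [hm1, hv]
    · have hcv : c.val < d := c.val_lt
      rintro (rfl | rfl)
      · have : (((c.val : ℕ) : ZMod (2 * d))).val = c.val := ZMod.val_cast_of_lt (by omega)
        rw [this]
        rw [natCast_val_int]
      · have : (((c.val + d : ℕ) : ZMod (2 * d))).val = c.val + d :=
          ZMod.val_cast_of_lt (by omega)
        rw [this]
        push_cast
        simp [natCast_val_int]
  rw [hset]
  rw [Finset.card_insert_of_notMem, Finset.card_singleton]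
  simp only [Finset.mem_singleton]
  intro hcontra
  have hd0 : 0 < d := Nat.pos_of_ne_zero (NeZero.ne d)
  have hcv : c.val < d := c.val_lt
  have h1 : (((c.val : ℕ) : ZMod (2 * d))).val = c.val := ZMod.val_cast_of_lt (by omega)
  have h2 : (((c.val + d : ℕ) : ZMod (2 * d))).val = c.val + d := by
    have hcv : c.val < d := c.val_lt
    exact ZMod.val_cast_of_lt (by omega)
  rw [hcontra] at h1
  rw [h2] at h1
  have hd : 0 < d := Nat.pos_of_ne_zero (NeZero.ne d)
  omega

end Aux3
section Aux4
variable (d : ℕ) [NeZero d]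

instance : NeZero (2 * d) := ⟨by have := NeZero.ne d; omega⟩

lemma sum_A_conj_A (a b k i : ZMod d) :
    ∑ m : ZMod (2 * d) × ZMod (2 * d), (starRingEnd ℂ) (A d m k i) * A d m a b
      = if k = a ∧ i = b then (4 * (d : ℂ)) else 0 := by
  rw [Fintype.sum_prod_type]
  have inner : ∀ m1 : ZMod (2 * d),
      (∑ m2 : ZMod (2 * d), (starRingEnd ℂ) (A d (m1, m2) k i) * A d (m1, m2) a b)
      = if (k + i = ((m1.val : ℤ) : ZMod d) ∧ a + b = ((m1.val : ℤ) : ZMod d) ∧ k = a)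
        then (2 * (d : ℂ)) else 0 := by
    intro m1
    by_cases h1 : k + i = ((m1.val : ℤ) : ZMod d)
    · by_cases h2 : a + b = ((m1.val : ℤ) : ZMod d)
      · have hterm : ∀ m2 : ZMod (2 * d),
            (starRingEnd ℂ) (A d (m1, m2) k i) * A d (m1, m2) a b
            = omega (2 * d) ((m2.val : ℤ) * (2 * ((a.val : ℤ) - (k.val : ℤ)))) := by
          intro m2
          rw [A_apply, A_apply]
          simp only [h1, h2, if_pos]
          rw [omega_conj, ← omega_add']
          congr 1
          ring
        rw [Finset.sum_congr rfl (fun m2 _ => hterm m2), sum_omega]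
        have hiff : ((2 * d : ℕ) : ℤ) ∣ 2 * ((a.val : ℤ) - (k.val : ℤ)) ↔ k = a := by
          rw [← dvd_sub_val_iff d a k]
          constructor
          · intro ⟨s, hs⟩; exact ⟨s, by push_cast at hs ⊢; linarith⟩
          · intro ⟨s, hs⟩; exact ⟨s, by push_cast at hs ⊢; linarith⟩
        by_cases hk : k = a
        · rw [if_pos (hiff.mpr hk), if_pos ⟨h1, h2, hk⟩]; push_cast; ring
        · rw [if_neg (fun hc => hk (hiff.mp hc)), if_neg (by tauto)]
      · rw [if_neg (by tauto)]
        apply Finset.sum_eq_zero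
        intro m2 _
        have hz : A d (m1, m2) a b = 0 := by rw [A_apply]; exact if_neg h2
        rw [hz, mul_zero]
    · rw [if_neg (by tauto)]
      apply Finset.sum_eq_zero
      intro m2 _
      have hz : A d (m1, m2) k i = 0 := by rw [A_apply]; exact if_neg h1
      rw [hz, map_zero, zero_mul]
  rw [Finset.sum_congr rfl (fun m1 _ => inner m1)]
  by_cases hk : k = a
  · by_cases hi : i = b
    · subst hk; subst hi
      have hcond : ∀ m1 : ZMod (2 * d),
          (k + i = ((m1.val : ℤ) : ZMod d) ∧ k + i = ((m1.val : ℤ) : ZMod d) ∧ k = k)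
          ↔ (((m1.val : ℤ) : ZMod d) = k + i) := by
        intro m1; constructor
        · rintro ⟨h, -, -⟩; exact h.symm
        · intro h; exact ⟨h.symm, h.symm, rfl⟩
      rw [if_pos ⟨rfl, rfl⟩]
      calc ∑ m1 : ZMod (2 * d), (if (k + i = ((m1.val : ℤ) : ZMod d) ∧
              k + i = ((m1.val : ℤ) : ZMod d) ∧ k = k) then (2 * (d : ℂ)) else 0)
          = ∑ m1 : ZMod (2 * d), (if ((m1.val : ℤ) : ZMod d) = k + i then (2 * (d : ℂ)) else 0) := by
            apply Finset.sum_congr rfl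
            intro m1 _
            by_cases h : ((m1.val : ℤ) : ZMod d) = k + i
            · rw [if_pos ((hcond m1).mpr h), if_pos h]
            · rw [if_neg (fun hc => h ((hcond m1).mp hc)), if_neg h]
        _ = ((Finset.univ.filter fun m1 : ZMod (2 * d) =>
              ((m1.val : ℤ) : ZMod d) = k + i).card : ℂ) * (2 * (d : ℂ)) := by
            rw [← Finset.sum_filter, Finset.sum_const, nsmul_eq_mul]
        _ = 4 * (d : ℂ) := by rw [card_fiber]; push_cast; ring
    · rw [if_neg (by tauto)]
      apply Finset.sum_eq_zero
      intro m1 _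
      rw [if_neg]
      rintro ⟨ha1, ha2, -⟩
      subst hk
      exact hi (add_left_cancel (ha1.trans ha2.symm))
  · rw [if_neg (by tauto)]
    apply Finset.sum_eq_zero
    intro m1 _
    exact if_neg (by tauto)

end Aux4
section Aux5
variable (d : ℕ) [NeZero d]

lemma OpW_Wig (O : Matrix (ZMod d) (ZMod d) ℂ) : OpW d (Wig d O) = O := by
  have hd : (d : ℂ) ≠ 0 := Nat.cast_ne_zero.mpr (NeZero.ne d)
  ext a b
  unfold OpW Wig
  simp only [Matrix.smul_apply, Matrix.sum_apply, smul_eq_mul]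
  have htr : ∀ m : ZMod (2 * d) × ZMod (2 * d),
      ((A d m)ᴴ * O).trace = ∑ i : ZMod d, ∑ k : ZMod d, (starRingEnd ℂ) (A d m k i) * O k i := by
    intro m
    rw [Matrix.trace]
    simp only [Matrix.diag_apply, Matrix.mul_apply, Matrix.conjTranspose_apply]
    rfl
  have key : ∑ m : ZMod (2 * d) × ZMod (2 * d),
      1 / (2 * (d : ℂ)) * ((A d m)ᴴ * O).trace * A d m a b = 2 * O a b := by
    have e1 : ∀ m : ZMod (2 * d) × ZMod (2 * d),
        1 / (2 * (d : ℂ)) * ((A d m)ᴴ * O).trace * A d m a b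
        = ∑ i : ZMod d, ∑ k : ZMod d,
            (1 / (2 * (d : ℂ))) * ((starRingEnd ℂ) (A d m k i) * O k i * A d m a b) := by
      intro m
      rw [htr m, Finset.mul_sum, Finset.sum_mul]
      apply Finset.sum_congr rfl; intro i _
      rw [Finset.mul_sum, Finset.sum_mul]
      apply Finset.sum_congr rfl; intro k _
      ring
    rw [Finset.sum_congr rfl (fun m _ => e1 m), Finset.sum_comm]
    rw [Finset.sum_congr rfl (fun (i : ZMod d) _ => Finset.sum_comm (s := Finset.univ)
      (t := Finset.univ)
      (f := fun (m : ZMod (2 * d) × ZMod (2 * d)) (k : ZMod d) =>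
        (1 / (2 * (d : ℂ))) * ((starRingEnd ℂ) (A d m k i) * O k i * A d m a b)))]
    have e3 : ∀ (i k : ZMod d),
        (∑ m : ZMod (2 * d) × ZMod (2 * d),
          (1 / (2 * (d : ℂ))) * ((starRingEnd ℂ) (A d m k i) * O k i * A d m a b))
        = if k = a then (if i = b then (1 / (2 * (d : ℂ))) * O k i * (4 * (d : ℂ)) else 0)
          else 0 := by
      intro i k
      have hre : ∀ m : ZMod (2 * d) × ZMod (2 * d),
          (1 / (2 * (d : ℂ))) * ((starRingEnd ℂ) (A d m k i) * O k i * A d m a b)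
          = (1 / (2 * (d : ℂ))) * O k i * ((starRingEnd ℂ) (A d m k i) * A d m a b) := by
        intro m; ring
      rw [Finset.sum_congr rfl (fun m _ => hre m), ← Finset.mul_sum, sum_A_conj_A]
      by_cases hk : k = a
      · by_cases hi : i = b
        · rw [if_pos ⟨hk, hi⟩, if_pos hk, if_pos hi]
        · rw [if_neg (by tauto), if_pos hk, if_neg hi, mul_zero]
      · rw [if_neg (by tauto), if_neg hk, mul_zero]
    rw [Finset.sum_congr rfl (fun (i : ZMod d) _ => Finset.sum_congr rfl
      (fun (k : ZMod d) _ => e3 i k))]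
    rw [Finset.sum_congr rfl (fun (i : ZMod d) _ =>
      Finset.sum_ite_eq' Finset.univ a
        (fun k => if i = b then (1 / (2 * (d : ℂ))) * O k i * (4 * (d : ℂ)) else 0))]
    simp only [Finset.mem_univ, if_true]
    rw [Finset.sum_ite_eq' Finset.univ b
      (fun i => (1 / (2 * (d : ℂ))) * O a i * (4 * (d : ℂ)))]
    simp only [Finset.mem_univ, if_true]
    field_simp
    ring
  rw [key]
  ring
end Aux5
section Aux6
variable (d : ℕ) [NeZero d]

lemma A_cov (α : ZMod d × ZMod d) (m : ZMod (2 * d) × ZMod (2 * d)) :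
    Vint d ((α.1.val : ℤ), (α.2.val : ℤ)) * A d m *
      (Vint d ((α.1.val : ℤ), (α.2.val : ℤ)))ᴴ = A d (m + dbl2 d α) := by
  set k1 : ℤ := (α.1.val : ℤ) with hk1
  set k2 : ℤ := (α.2.val : ℤ) with hk2
  clear_value k1 k2
  have hk1c : ((k1 : ℤ) : ZMod d) = α.1 := by rw [hk1]; exact natCast_val_int d α.1
  have hk2c : ((k2 : ℤ) : ZMod d) = α.2 := by rw [hk2]; exact natCast_val_int d α.2
  ext a b
  -- compute LHS entry
  rw [Matrix.mul_apply]
  have hstep1 : ∀ j : ZMod d,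
      (Vint d (k1, k2) * A d m) a j * (Vint d (k1, k2))ᴴ j b
      = if j = b - α.1 then (Vint d (k1, k2) * A d m) a (b - α.1) *
          star (omega (2 * d) (2 * k2 * (b.val : ℤ) - k1 * k2)) else 0 := by
    intro j
    rw [Matrix.conjTranspose_apply, Vint_apply]
    by_cases hj : j = b - α.1
    · have : b = j + ((k1 : ℤ) : ZMod d) := by rw [hk1c, hj]; ring
      rw [if_pos hj, if_pos this, hj]
    · have : ¬ (b = j + ((k1 : ℤ) : ZMod d)) := by
        rw [hk1c]; intro h; exact hj (by rw [h]; ring)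
      rw [if_neg this, star_zero, mul_zero, if_neg hj]
  rw [Finset.sum_congr rfl (fun j _ => hstep1 j), Finset.sum_ite_eq' Finset.univ (b - α.1)]
  simp only [Finset.mem_univ, if_true]
  rw [Matrix.mul_apply]
  have hstep2 : ∀ l : ZMod d,
      Vint d (k1, k2) a l * A d m l (b - α.1)
      = if l = a - α.1 then omega (2 * d) (2 * k2 * (a.val : ℤ) - k1 * k2) *
          A d m (a - α.1) (b - α.1) else 0 := by
    intro l
    rw [Vint_apply]
    by_cases hl : l = a - α.1
    · have : a = l + ((k1 : ℤ) : ZMod d) := by rw [hk1c, hl]; ring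
      rw [if_pos hl, if_pos this, hl]
    · have : ¬ (a = l + ((k1 : ℤ) : ZMod d)) := by
        rw [hk1c]; intro h; exact hl (by rw [h]; ring)
      rw [if_neg this, zero_mul, if_neg hl]
  rw [Finset.sum_congr rfl (fun l _ => hstep2 l), Finset.sum_ite_eq' Finset.univ (a - α.1)]
  simp only [Finset.mem_univ, if_true]
  -- expand A d m at shifted indices, with representative a.val - k1
  rw [A_apply' d m (m.1.val : ℤ) (m.2.val : ℤ) (natCast_val_int _ m.1) (natCast_val_int _ m.2)
    (a - α.1) (b - α.1) ((a.val : ℤ) - k1) (by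
      push_cast
      rw [hk1c]
      simp [ZMod.natCast_val, ZMod.cast_id])]
  -- expand RHS
  rw [A_apply' d (m + dbl2 d α) ((m.1.val : ℤ) + 2 * k1) ((m.2.val : ℤ) + 2 * k2) ?h1 ?h2
    a b (a.val : ℤ) (natCast_val_int _ a)]
  case h1 =>
    show (((m.1.val : ℤ) + 2 * k1 : ℤ) : ZMod (2 * d)) = (m + dbl2 d α).1
    unfold dbl2 dbl
    rw [hk1]
    push_cast
    simp only [ZMod.natCast_val, ZMod.cast_id, Prod.fst_add]
  case h2 =>
    show (((m.2.val : ℤ) + 2 * k2 : ℤ) : ZMod (2 * d)) = (m + dbl2 d α).2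
    unfold dbl2 dbl
    rw [hk2]
    push_cast
    simp only [ZMod.natCast_val, ZMod.cast_id, Prod.snd_add]
  -- compare conditions
  have hcond : (a - α.1 + (b - α.1) = (((m.1.val : ℤ)) : ZMod d))
      ↔ (a + b = ((((m.1.val : ℤ) + 2 * k1 : ℤ)) : ZMod d)) := by
    constructor
    · intro h
      push_cast at h ⊢
      simp only [ZMod.natCast_val, ZMod.cast_id] at h ⊢
      linear_combination h - 2 * hk1c
    · intro h
      push_cast at h ⊢
      simp only [ZMod.natCast_val, ZMod.cast_id] at h ⊢
      linear_combination h + 2 * hk1c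
  by_cases hc : a - α.1 + (b - α.1) = (((m.1.val : ℤ)) : ZMod d)
  · rw [if_pos hc, if_pos (hcond.mp hc)]
    rw [show star (omega (2 * d) (2 * k2 * (b.val : ℤ) - k1 * k2))
        = omega (2 * d) (-(2 * k2 * (b.val : ℤ) - k1 * k2)) from omega_conj _ _,
      ← omega_add', ← omega_add']
    apply omega_congr
    -- divisibility of exponent difference
    have hdvd : ((d : ℕ) : ℤ) ∣ ((a.val : ℤ) + (b.val : ℤ) - (m.1.val : ℤ) - 2 * k1) := by
      have := hcond.mp hc
      have h0 : ((((a.val : ℤ) + (b.val : ℤ) - (m.1.val : ℤ) - 2 * k1 : ℤ)) : ZMod d) = 0 := by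
        have h' := this
        push_cast at h' ⊢
        simp only [ZMod.natCast_val, ZMod.cast_id] at h' ⊢
        linear_combination h'
      exact (ZMod.intCast_zmod_eq_zero_iff_dvd _ d).mp h0
    obtain ⟨s, hs⟩ := hdvd
    exact ⟨-(k2 * s), by push_cast; linear_combination (-2 * k2) * hs⟩
  · rw [if_neg hc, if_neg (fun h => hc (hcond.mpr h))]
    ring

end Aux6
section Aux7
variable (d : ℕ) [NeZero d]

lemma AM_eq (M : ZMod (2 * d) × ZMod (2 * d) → ℂ) (α : ZMod d × ZMod d) :
    AM d M α = Vint d ((α.1.val : ℤ), (α.2.val : ℤ)) * OpW d M *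
      (Vint d ((α.1.val : ℤ), (α.2.val : ℤ)))ᴴ := by
  unfold AM OpW
  rw [Matrix.mul_smul, Matrix.smul_mul]
  congr 1
  rw [Matrix.mul_sum, Matrix.sum_mul]
  apply Finset.sum_congr rfl
  intro m _
  rw [Matrix.mul_smul, Matrix.smul_mul, A_cov d α m]

lemma AM_zero (M : ZMod (2 * d) × ZMod (2 * d) → ℂ) : AM d M 0 = OpW d M := by
  unfold AM OpW
  congr 1
  apply Finset.sum_congr rfl
  intro m _
  have : dbl2 d (0 : ZMod d × ZMod d) = 0 := by
    unfold dbl2 dbl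
    simp [ZMod.val_zero]
  rw [this, add_zero]

end Aux7

theorem stmt14 (d : ℕ) [NeZero d] (M1 M2 : ZMod (2 * d) × ZMod (2 * d) → ℂ)
    (h1 : IsValidStencil d M1) (h2 : IsValidStencil d M2) :
    (∀ α : ZMod d × ZMod d, AM d M1 α = AM d M2 α) ↔ P d M1 = P d M2 := by
  constructor
  · intro h
    have h0 := h 0
    rw [AM_zero, AM_zero] at h0
    show Wig d (OpW d M1) = Wig d (OpW d M2)
    rw [h0]
  · intro h α
    have hw : Wig d (OpW d M1) = Wig d (OpW d M2) := h
    have hOp : OpW d M1 = OpW d M2 := by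
      calc OpW d M1 = OpW d (Wig d (OpW d M1)) := (OpW_Wig d (OpW d M1)).symm
        _ = OpW d (Wig d (OpW d M2)) := by rw [hw]
        _ = OpW d M2 := OpW_Wig d (OpW d M2)
    rw [AM_eq, AM_eq, hOp]
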